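/- arXiv:0905.1106 — 2 statements merged into one kernel-verified Lean document; each statement's English description precedes it below -/
import Mathlib

section
/- Let G and H be simple graphs on Fin N, let 𝒜 ⊆ Fin N × Fin N be a set of allowed matches, and suppose there exists at least one permutation σ₀ of Fin N with (i, σ₀(i)) ∈ 𝒜 for all i. Fix λ ∈ (0,1), and for a permutation π of Fin N let pen(π) denote the number of indices i with (i, π(i)) ∉ 𝒜. If M > λ·N²/(1−λ), then every permutation π* maximizing λ·J(π) − (1−λ)·M·pen(π) over all permutations π of Fin N satisfies pen(π*) = 0 (i.e., π* respects all constraints) and achieves J(π*) = max{J(π) : π a permutation with (i, π(i)) ∈ 𝒜 for all i}. Hence the constrained network alignment problem is a particular case of the balanced network alignment problem. -/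
open Matrix

/-- The number of conserved interactions `J(π)`: the number of unordered pairs `{i,j}` of
distinct vertices (encoded as ordered pairs with `i < j`) such that `i` and `j` are adjacent
in `G` and `π i` and `π j` are adjacent in `H`. -/
def numConserved {N : ℕ} (G H : SimpleGraph (Fin N))
    [DecidableRel G.Adj] [DecidableRel H.Adj] (π : Equiv.Perm (Fin N)) : ℕ :=
  (Finset.univ.filter (fun p : Fin N × Fin N =>
    p.1 < p.2 ∧ G.Adj p.1 p.2 ∧ H.Adj (π p.1) (π p.2))).card

/-- `pen(π)`: the number of indices `i` such that `(i, π i)` is NOT an allowed match. -/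
def pen {N : ℕ} (𝒜 : Finset (Fin N × Fin N)) (π : Equiv.Perm (Fin N)) : ℕ :=
  (Finset.univ.filter (fun i : Fin N => (i, π i) ∉ 𝒜)).card

theorem constrained_is_special_case_of_balanced {N : ℕ}
    (G H : SimpleGraph (Fin N)) [DecidableRel G.Adj] [DecidableRel H.Adj]
    (𝒜 : Finset (Fin N × Fin N))
    (σ₀ : Equiv.Perm (Fin N)) (hσ₀ : ∀ i, (i, σ₀ i) ∈ 𝒜)
    (lam : ℝ) (hlam : lam ∈ Set.Ioo (0 : ℝ) 1)
    (M : ℝ) (hM : M > lam * (N : ℝ) ^ 2 / (1 - lam))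
    (πstar : Equiv.Perm (Fin N))
    (hmax : ∀ π : Equiv.Perm (Fin N),
      lam * (numConserved G H π : ℝ) - (1 - lam) * M * (pen 𝒜 π : ℝ) ≤
        lam * (numConserved G H πstar : ℝ) - (1 - lam) * M * (pen 𝒜 πstar : ℝ)) :
    pen 𝒜 πstar = 0 ∧
      ∀ π : Equiv.Perm (Fin N), (∀ i, (i, π i) ∈ 𝒜) →
        numConserved G H π ≤ numConserved G H πstar := by
  obtain ⟨hl0, hl1⟩ := hlam
  have h1l : (0:ℝ) < 1 - lam := by linarith
  have hbound : ∀ π : Equiv.Perm (Fin N), (numConserved G H π : ℝ) ≤ (N:ℝ)^2 := by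
    intro π
    have h : numConserved G H π ≤ N^2 := by
      calc numConserved G H π ≤ (Finset.univ : Finset (Fin N × Fin N)).card :=
            Finset.card_filter_le _ _
        _ = N^2 := by simp [sq]
    exact_mod_cast h
  have hpen0 : ∀ π : Equiv.Perm (Fin N), (∀ i, (i, π i) ∈ 𝒜) → pen 𝒜 π = 0 := by
    intro π hπ
    simp [pen, Finset.filter_eq_empty_iff, hπ]
  have hMpos : M > 0 := lt_of_le_of_lt (by positivity) hM
  have hstar0 : pen 𝒜 πstar = 0 := by
    by_contra h
    have hp1 : (1:ℝ) ≤ (pen 𝒜 πstar : ℝ) := by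
      exact_mod_cast Nat.one_le_iff_ne_zero.mpr h
    have h0 := hmax σ₀
    rw [hpen0 σ₀ hσ₀] at h0
    have hb1 := hbound πstar
    have hJ0 : (0:ℝ) ≤ (numConserved G H σ₀ : ℝ) := Nat.cast_nonneg _
    have hM' : lam * (N:ℝ)^2 < M * (1 - lam) := (div_lt_iff₀ h1l).mp hM
    push_cast at h0
    nlinarith [mul_le_mul_of_nonneg_left hp1 (le_of_lt (mul_pos h1l hMpos)),
      mul_le_mul_of_nonneg_left hb1 (le_of_lt hl0)]
  refine ⟨hstar0, fun π hπ => ?_⟩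
  have h0 := hmax π
  rw [hpen0 π hπ, hstar0] at h0
  simp at h0
  have : (numConserved G H π : ℝ) ≤ (numConserved G H πstar : ℝ) := by
    nlinarith
  exact_mod_cast this
end

section
/- Let G and H be simple graphs on Fin N, let c : Fin N → Fin L be a cluster assignment, and let B ⊆ Fin L be a set of clusters such that no edge of G and no edge of H joins a vertex whose cluster lies in B to a vertex whose cluster lies outside B. For a cluster-preserving permutation π, let J_B(π) be the number of conserved pairs both of whose endpoints have clusters in B, and J_{Bᶜ}(π) the number of conserved pairs both of whose endpoints have clusters outside B. Then for every cluster-preserving permutation π, J(π) = J_B(π) + J_{Bᶜ}(π), and moreover max over cluster-preserving permutations π of J(π) equals (max over cluster-preserving π of J_B(π)) + (max over cluster-preserving π of J_{Bᶜ}(π)). That is, the alignment within disconnected parts of the cluster network can be optimized independently. -/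
open Matrix

/-- `J_B(π)`: the number of conserved pairs both of whose endpoints have clusters in `B`. -/
def JIn {N L : ℕ} (G H : SimpleGraph (Fin N))
    [DecidableRel G.Adj] [DecidableRel H.Adj] (c : Fin N → Fin L)
    (B : Finset (Fin L)) (π : Equiv.Perm (Fin N)) : ℕ :=
  (Finset.univ.filter (fun p : Fin N × Fin N =>
    p.1 < p.2 ∧ G.Adj p.1 p.2 ∧ H.Adj (π p.1) (π p.2) ∧
      c p.1 ∈ B ∧ c p.2 ∈ B)).card

/-- `J_{Bᶜ}(π)`: the number of conserved pairs both of whose endpoints have clusters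
outside `B`. -/
def JOut {N L : ℕ} (G H : SimpleGraph (Fin N))
    [DecidableRel G.Adj] [DecidableRel H.Adj] (c : Fin N → Fin L)
    (B : Finset (Fin L)) (π : Equiv.Perm (Fin N)) : ℕ :=
  (Finset.univ.filter (fun p : Fin N × Fin N =>
    p.1 < p.2 ∧ G.Adj p.1 p.2 ∧ H.Adj (π p.1) (π p.2) ∧
      c p.1 ∉ B ∧ c p.2 ∉ B)).card

lemma split_aux {N L : ℕ} (G H : SimpleGraph (Fin N)) [DecidableRel G.Adj] [DecidableRel H.Adj]
    (c : Fin N → Fin L) (B : Finset (Fin L))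
    (hG : ∀ i j, G.Adj i j → ¬(c i ∈ B ∧ c j ∉ B))
    (π : Equiv.Perm (Fin N)) :
    numConserved G H π = JIn G H c B π + JOut G H c B π := by
  classical
  have key : ∀ p : Fin N × Fin N, G.Adj p.1 p.2 → (c p.1 ∈ B ↔ c p.2 ∈ B) := by
    intro p hp
    constructor
    · intro h1; by_contra h2; exact hG p.1 p.2 hp ⟨h1, h2⟩
    · intro h2; by_contra h1; exact hG p.2 p.1 hp.symm ⟨h2, h1⟩
  unfold numConserved JIn JOut
  rw [← Finset.card_filter_add_card_filter_not
    (s := Finset.univ.filter (fun p : Fin N × Fin N =>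
      p.1 < p.2 ∧ G.Adj p.1 p.2 ∧ H.Adj (π p.1) (π p.2)))
    (p := fun p => c p.1 ∈ B)]
  congr 1
  · rw [Finset.filter_filter]
    congr 1
    apply Finset.filter_congr
    intro p _
    constructor
    · rintro ⟨⟨h1, h2, h3⟩, h4⟩; exact ⟨h1, h2, h3, h4, (key p h2).mp h4⟩
    · rintro ⟨h1, h2, h3, h4, _⟩; exact ⟨⟨h1, h2, h3⟩, h4⟩
  · rw [Finset.filter_filter]
    congr 1
    apply Finset.filter_congr
    intro p _
    constructor
    · rintro ⟨⟨h1, h2, h3⟩, h4⟩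
      exact ⟨h1, h2, h3, h4, fun h5 => h4 ((key p h2).mpr h5)⟩
    · rintro ⟨h1, h2, h3, h4, _⟩; exact ⟨⟨h1, h2, h3⟩, h4⟩

theorem disconnected_cluster_parts_optimized_independently {N L : ℕ}
    (G H : SimpleGraph (Fin N)) [DecidableRel G.Adj] [DecidableRel H.Adj]
    (c : Fin N → Fin L) (B : Finset (Fin L))
    (hG : ∀ i j, G.Adj i j → ¬(c i ∈ B ∧ c j ∉ B))
    (hH : ∀ i j, H.Adj i j → ¬(c i ∈ B ∧ c j ∉ B)) :
    (∀ π : Equiv.Perm (Fin N), (∀ i, c (π i) = c i) →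
        numConserved G H π = JIn G H c B π + JOut G H c B π) ∧
      (Finset.univ.filter
          (fun π : Equiv.Perm (Fin N) => ∀ i, c (π i) = c i)).sup (numConserved G H) =
        (Finset.univ.filter
            (fun π : Equiv.Perm (Fin N) => ∀ i, c (π i) = c i)).sup (JIn G H c B) +
          (Finset.univ.filter
              (fun π : Equiv.Perm (Fin N) => ∀ i, c (π i) = c i)).sup (JOut G H c B) := by
  classical
  refine ⟨fun π _ => split_aux G H c B hG π, ?_⟩
  set S := Finset.univ.filter (fun π : Equiv.Perm (Fin N) => ∀ i, c (π i) = c i) with hS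
  have hSne : S.Nonempty := ⟨1, by simp [hS]⟩
  have hmemS : ∀ π, π ∈ S ↔ ∀ i, c (π i) = c i := by intro π; simp [hS]
  apply le_antisymm
  · apply Finset.sup_le
    intro π hπ
    rw [split_aux G H c B hG π]
    exact Nat.add_le_add (Finset.le_sup hπ) (Finset.le_sup hπ)
  · obtain ⟨π₁, hπ₁, h1⟩ := Finset.exists_mem_eq_sup S hSne (JIn G H c B)
    obtain ⟨π₂, hπ₂, h2⟩ := Finset.exists_mem_eq_sup S hSne (JOut G H c B)
    rw [hmemS] at hπ₁ hπ₂
    -- combined permutation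
    have hp1 : ∀ x, c (π₁ x) ∈ B ↔ c x ∈ B := fun x => by rw [hπ₁ x]
    have hp2 : ∀ x, ¬ c (π₂ x) ∈ B ↔ ¬ c x ∈ B := fun x => by rw [hπ₂ x]
    set σ : Equiv.Perm (Fin N) :=
      Equiv.Perm.subtypeCongr (π₁.subtypePerm hp1) (π₂.subtypePerm (p := fun x => ¬ c x ∈ B) hp2) with hσdef
    have hσ1 : ∀ x, c x ∈ B → σ x = π₁ x := by
      intro x hx
      simp [hσdef, Equiv.Perm.subtypeCongr.apply, hx, Equiv.Perm.subtypePerm_apply]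
    have hσ2 : ∀ x, c x ∉ B → σ x = π₂ x := by
      intro x hx
      simp [hσdef, Equiv.Perm.subtypeCongr.apply, hx, Equiv.Perm.subtypePerm_apply]
    have hσS : σ ∈ S := by
      rw [hmemS]
      intro i
      by_cases h : c i ∈ B
      · rw [hσ1 i h, hπ₁ i]
      · rw [hσ2 i h, hπ₂ i]
    have hin : JIn G H c B σ = JIn G H c B π₁ := by
      unfold JIn
      congr 1
      apply Finset.filter_congr
      intro p _
      constructor
      · rintro ⟨h1, h2, h3, h4, h5⟩
        exact ⟨h1, h2, by rwa [hσ1 _ h4, hσ1 _ h5] at h3, h4, h5⟩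
      · rintro ⟨h1, h2, h3, h4, h5⟩
        exact ⟨h1, h2, by rwa [hσ1 _ h4, hσ1 _ h5], h4, h5⟩
    have hout : JOut G H c B σ = JOut G H c B π₂ := by
      unfold JOut
      congr 1
      apply Finset.filter_congr
      intro p _
      constructor
      · rintro ⟨h1, h2, h3, h4, h5⟩
        exact ⟨h1, h2, by rwa [hσ2 _ h4, hσ2 _ h5] at h3, h4, h5⟩
      · rintro ⟨h1, h2, h3, h4, h5⟩
        exact ⟨h1, h2, by rwa [hσ2 _ h4, hσ2 _ h5], h4, h5⟩
    calc S.sup (JIn G H c B) + S.sup (JOut G H c B)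
        = JIn G H c B σ + JOut G H c B σ := by rw [hin, hout, h1, h2]
      _ = numConserved G H σ := (split_aux G H c B hG σ).symm
      _ ≤ S.sup (numConserved G H) := Finset.le_sup hσS
end
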